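/- Let k ≥ 1 and let G be a chordal k-colorable graph on n ≥ 1 vertices, and let T be a clique of G. Then there exists a chordal nice tree decomposition of the terminal graph (G,T) that has at most (k+3)·n nodes. -/

import Mathlib

open SimpleGraph

/-- A proper `k`-coloring of a graph. -/
def IsColoring {W : Type*} (G : SimpleGraph W) (k : ℕ) (α : W → Fin k) : Prop :=
  ∀ u v : W, G.Adj u v → α u ≠ α v

/-- The `k`-color graph `C_k(G)`: nodes are proper `k`-colorings of `G`,
two colorings being adjacent iff they differ on exactly one vertex. -/
def colorGraph {W : Type*} (G : SimpleGraph W) (k : ℕ) :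
    SimpleGraph {α : W → Fin k // IsColoring G k α} where
  Adj α β := ∃! w, α.1 w ≠ β.1 w
  symm := ⟨by
    rintro α β ⟨w, hw, hu⟩
    exact ⟨w, hw.symm, fun u hu' => hu u hu'.symm⟩⟩
  loopless := ⟨by
    rintro α ⟨w, hw, -⟩
    exact hw rfl⟩

/-- The subgraph of a labeled graph consisting of the edges between
equally labeled nodes. -/
def sameLabelSub {N L : Type*} (H : SimpleGraph N) (f : N → L) : SimpleGraph N where
  Adj x y := H.Adj x y ∧ f x = f y
  symm := ⟨fun _ _ h => ⟨h.1.symm, h.2.symm⟩⟩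
  loopless := ⟨fun x h => H.ne_of_adj h.1 rfl⟩

/-- The quotient graph obtained from a labeled graph by contracting every
(maximal) connected set of equally labeled nodes (i.e. every label component)
into a single node. -/
def quotGraph {N L : Type*} (H : SimpleGraph N) (f : N → L) :
    SimpleGraph (sameLabelSub H f).ConnectedComponent where
  Adj c d := c ≠ d ∧ ∃ a b, (sameLabelSub H f).connectedComponentMk a = c ∧
      (sameLabelSub H f).connectedComponentMk b = d ∧ H.Adj a b
  symm := ⟨by
    rintro c d ⟨hne, a, b, ha, hb, hab⟩
    exact ⟨hne.symm, b, a, hb, ha, hab.symm⟩⟩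
  loopless := ⟨fun c h => h.1 rfl⟩

/-- The common label of a label component. -/
def quotLabel {N L : Type*} (H : SimpleGraph N) (f : N → L) :
    (sameLabelSub H f).ConnectedComponent → L :=
  SimpleGraph.ConnectedComponent.lift f (by
    intro v w p hp
    clear hp
    induction p with
    | nil => rfl
    | cons h _ ih => exact (h : H.Adj _ _ ∧ f _ = f _).2.trans ih)

/-- The label of a coloring: its restriction to the terminal set `T`. -/
def csgLabelFun {W : Type*} (G : SimpleGraph W) (k : ℕ) (T : Set W) :
    {α : W → Fin k // IsColoring G k α} → (T → Fin k) :=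
  fun α t => α.1 t.1

/-- The node set of the contracted solution graph: the label components. -/
abbrev CSGNode {W : Type*} (G : SimpleGraph W) (k : ℕ) (T : Set W) :=
  (sameLabelSub (colorGraph G k) (csgLabelFun G k T)).ConnectedComponent

/-- The contracted solution graph `C^c_k(G,T)`. -/
def CSG {W : Type*} (G : SimpleGraph W) (k : ℕ) (T : Set W) : SimpleGraph (CSGNode G k T) :=
  quotGraph (colorGraph G k) (csgLabelFun G k T)

/-- The `γ`-node of the contracted solution graph: the label component containing `γ`. -/
def csgNode {W : Type*} (G : SimpleGraph W) (k : ℕ) (T : Set W)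
    (γ : {α : W → Fin k // IsColoring G k α}) : CSGNode G k T :=
  (sameLabelSub (colorGraph G k) (csgLabelFun G k T)).connectedComponentMk γ

/-- The label of a node of the contracted solution graph: the common restriction
to `T` of its colorings. -/
def csgLabel {W : Type*} (G : SimpleGraph W) (k : ℕ) (T : Set W) :
    CSGNode G k T → (T → Fin k) :=
  quotLabel (colorGraph G k) (csgLabelFun G k T)

/-- The restriction of a proper coloring to an induced subgraph. -/
def restrictColoring {W : Type*} (G : SimpleGraph W) (k : ℕ) (S : Set W)
    (γ : {α : W → Fin k // IsColoring G k α}) :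
    {α : S → Fin k // IsColoring (G.induce S) k α} :=
  ⟨fun u => γ.1 u.1, fun u w h => γ.2 u.1 w.1 h⟩

/-- A graph is chordal if it contains no induced cycle of length greater than 3. -/
def Chordal {W : Type*} (G : SimpleGraph W) : Prop :=
  ∀ n : ℕ, 4 ≤ n → IsEmpty (SimpleGraph.cycleGraph n ↪g G)

/-- `S` is a vertex cut: `G - S` is disconnected. -/
def IsVertexCut {W : Type*} (G : SimpleGraph W) (S : Set W) : Prop :=
  ¬ (G.induce Sᶜ).Preconnected

/-- `G` is `l`-connected. -/
def LConnected {W : Type*} (G : SimpleGraph W) (l : ℕ) : Prop :=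
  G.Connected ∧ l + 1 ≤ Nat.card W ∧ ∀ S : Set W, IsVertexCut G S → l ≤ S.ncard

/-- A labeled graph `(H,ℓ)`, whose labels are `k`-colorings of the complete graph
on a vertex (type) `S`, is an `(|S|,k)`-color-complete graph. -/
def IsColorComplete {N S : Type*} (k : ℕ) (H : SimpleGraph N) (ℓ : N → S → Fin k) : Prop :=
  (∀ x, Function.Injective (ℓ x)) ∧
  (∀ f : S → Fin k, Function.Injective f → ∃! x, ℓ x = f) ∧
  (∀ x y, H.Adj x y ↔ ∃! s, ℓ x s ≠ ℓ y s)

/-- The injective neighborhood property. -/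
def INP {N L : Type*} (H : SimpleGraph N) (ℓ : N → L) : Prop :=
  ∀ u v w : N, H.Adj u v → H.Adj u w → v ≠ w → ℓ v ≠ ℓ w

/-- The weight `w(P)` of a walk `P` in a labeled graph: the sum over the vertices `x`
of `P` of the number of colors used by labels of neighbors of `x` in `P` but not by
the label of `x`. -/
noncomputable def walkWeight {N S : Type*} {k : ℕ} {G : SimpleGraph N} (ℓ : N → S → Fin k)
    {a b : N} (P : G.Walk a b) : ℕ :=
  letI := Classical.decEq N
  ∑ x ∈ P.support.toFinset,
    ((⋃ y ∈ P.toSubgraph.neighborSet x, Set.range (ℓ y)) \ Set.range (ℓ x)).ncard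

/-- `CNiceTD G U T n` holds iff there is a chordal nice tree decomposition (i.e. one
in which every bag is a clique of `G`) with exactly `n` nodes of the terminal graph
`(G[U], T)`, following the recursive definition via leaf, forget, introduce and join
operations. -/
inductive CNiceTD {V : Type*} (G : SimpleGraph V) : Set V → Set V → ℕ → Prop
  | leaf (T : Set V) (hbag : G.IsClique T) : CNiceTD G T T 1
  | forget (U T : Set V) (v : V) (hvU : v ∈ U) (hvT : v ∉ T)
      (hbag : G.IsClique T) (n : ℕ)
      (prev : CNiceTD G U (T ∪ {v}) n) : CNiceTD G U T (n + 1)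
  | introduce (U T : Set V) (v : V) (hv : v ∈ T) (hTU : T ⊆ U) (hne : T ≠ U)
      (hN : ∀ u ∈ U, G.Adj v u → u ∈ T) (hbag : G.IsClique T) (n : ℕ)
      (prev : CNiceTD G (U \ {v}) (T \ {v}) n) : CNiceTD G U T (n + 1)
  | join (U₁ U₂ T : Set V) (hcap : U₁ ∩ U₂ = T) (hne1 : U₁ ≠ T) (hne2 : U₂ ≠ T)
      (hedge : ∀ u v' : V, u ∈ U₁ ∪ U₂ → v' ∈ U₁ ∪ U₂ → G.Adj u v' →
        (u ∈ U₁ ∧ v' ∈ U₁) ∨ (u ∈ U₂ ∧ v' ∈ U₂))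
      (hbag : G.IsClique T) (n₁ n₂ : ℕ)
      (p1 : CNiceTD G U₁ T n₁) (p2 : CNiceTD G U₂ T n₂) :
      CNiceTD G (U₁ ∪ U₂) T (n₁ + n₂ + 1)

/-!
Induct on `|U \ T|`, showing that `(G[U], T)` has a decomposition with fewer than
`(k + 3)·|U \ T|` nodes whenever `T ⊂ U` is a clique. If `G[U \ T]` is disconnected, split off a
part `C` with no edges to the rest and join decompositions of `(G[T ∪ C], T)` and `(G[U \ C], T)`.
Otherwise let `S` be the terminals with a neighbour in `U \ T`. By chordality some `v ∈ U \ T` is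
adjacent to all of `S`: if `u` sees `S' ⊆ S` but not `s ∈ S`, take a shortest path from `u` to `s`
through `U \ T`; each `t ∈ S'` sees both of its ends, hence all of it, since otherwise `t` and a
segment of the path would span an induced cycle of length at least 4. So its second-to-last
vertex sees `S' ∪ {s}`. Decompose `(G[(U \ T) ∪ S], S ∪ {v})`, forget `v` and introduce the at most
`k` vertices of `T \ S`: this costs at most `k + 1` nodes while `|U \ T|` drops by one.
-/

namespace SimpleGraph

variable {V W : Type*} {G : SimpleGraph V}

theorem IsClique.ncard_le_of_colorable {s : Set V} {n : ℕ} (h : G.IsClique s)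
    (hc : G.Colorable n) : s.ncard ≤ n := by
  rcases s.finite_or_infinite with hs | hs
  · rw [Set.ncard_eq_toFinset_card s hs]
    exact IsClique.card_le_of_colorable (by simpa using h) hc
  · simp [hs.ncard]

theorem cycleGraph_adj_of_lt {n : ℕ} {i j : Fin (n + 2)} (hij : i < j) :
    (cycleGraph (n + 2)).Adj i j ↔ (j : ℕ) = i + 1 ∨ ((i : ℕ) = 0 ∧ (j : ℕ) = n + 1) := by
  rw [cycleGraph_adj', Fin.coe_sub_iff_lt.mpr hij, Fin.sub_val_of_le hij.le]
  have := j.isLt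
  rw [Fin.lt_def] at hij
  omega

def IsInducedPath (G : SimpleGraph V) (q : ℕ → V) (m : ℕ) : Prop :=
  Set.InjOn q (Set.Iic m) ∧ ∀ ⦃i j⦄, i < j → j ≤ m → (G.Adj (q i) (q j) ↔ j = i + 1)

namespace IsInducedPath

variable {q : ℕ → V} {m : ℕ}

theorem mono (hq : G.IsInducedPath q m) {l : ℕ} (hl : l ≤ m) : G.IsInducedPath q l :=
  ⟨hq.1.mono (Set.Iic_subset_Iic.mpr hl), fun _ _ hij hj => hq.2 hij (hj.trans hl)⟩

theorem tail (hq : G.IsInducedPath q (m + 1)) : G.IsInducedPath (fun t => q (t + 1)) m := by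
  refine ⟨fun i hi j hj hij => ?_, fun i j hij hj => ?_⟩
  · have := hq.1 (show i + 1 ≤ m + 1 by simp_all) (show j + 1 ≤ m + 1 by simp_all) hij
    omega
  · rw [hq.2 (by omega) (by omega)]
    omega

theorem map {G' : SimpleGraph W} (f : G ↪g G') (hq : G.IsInducedPath q m) :
    G'.IsInducedPath (f ∘ q) m :=
  ⟨f.injective.comp_injOn hq.1, fun _ _ hij hj => f.map_adj_iff.trans (hq.2 hij hj)⟩

theorem nonempty_cycleGraph_embedding (hq : G.IsInducedPath q m) {x : V}
    (hx : x ∉ q '' Set.Iic m) (hxq : ∀ i ≤ m, G.Adj (q i) x ↔ i = 0 ∨ i = m) :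
    Nonempty (cycleGraph (m + 2) ↪g G) := by
  let f : Fin (m + 2) → V := fun i => if (i : ℕ) ≤ m then q i else x
  have hf : ∀ i : Fin (m + 2), (i : ℕ) ≤ m ∧ f i = q i ∨ (i : ℕ) = m + 1 ∧ f i = x := by
    intro i
    by_cases hi : (i : ℕ) ≤ m
    · exact .inl ⟨hi, if_pos hi⟩
    · exact .inr ⟨by omega, if_neg hi⟩
  have hadj_lt : ∀ i j, i < j → (G.Adj (f i) (f j) ↔ (cycleGraph (m + 2)).Adj i j) := by
    intro i j hij
    rw [cycleGraph_adj_of_lt hij]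
    rw [Fin.lt_def] at hij
    rcases hf i with ⟨hi, hfi⟩ | ⟨hi, -⟩
    · rcases hf j with ⟨hj, hfj⟩ | ⟨hj, hfj⟩
      · rw [hfi, hfj, hq.2 hij hj]
        omega
      · rw [hfi, hfj, hxq i hi]
        omega
    · omega
  have hinj : Function.Injective f := by
    intro i j hij
    rcases hf i with ⟨hi, hfi⟩ | ⟨hi, hfi⟩ <;> rcases hf j with ⟨hj, hfj⟩ | ⟨hj, hfj⟩
    · exact Fin.ext (hq.1 hi hj (hfi ▸ hfj ▸ hij))
    · exact absurd ⟨i, hi, by rw [← hfi, hij, hfj]⟩ hx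
    · exact absurd ⟨j, hj, by rw [← hfj, ← hij, hfi]⟩ hx
    · exact Fin.ext (hi.trans hj.symm)
  refine ⟨⟨⟨f, hinj⟩, fun {i j} => ?_⟩⟩
  rcases lt_trichotomy i j with h | rfl | h
  · exact hadj_lt i j h
  · simp
  · rw [G.adj_comm, (cycleGraph _).adj_comm]
    exact hadj_lt j i h

end IsInducedPath

theorem Walk.isInducedPath_getVert_of_length_eq_dist {u v : V} (p : G.Walk u v)
    (hp : p.length = G.dist u v) : G.IsInducedPath p.getVert p.length := by
  refine ⟨(p.isPath_of_length_eq_dist hp).getVert_injOn, fun i j hij hj => ⟨fun hadj => ?_, ?_⟩⟩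
  · by_contra hne
    have := G.dist_le ((p.take i).append (.cons hadj (p.drop j)))
    simp only [Walk.length_append, Walk.take_length, Walk.length_cons, Walk.drop_length] at this
    omega
  · rintro rfl
    exact p.adj_getVert_succ (by omega)

theorem exists_ssubset_closed_of_not_connected_induce {A : Set V} (hA : A.Nonempty)
    (h : ¬(G.induce A).Connected) :
    ∃ C ⊂ A, C.Nonempty ∧ ∀ x ∈ C, ∀ y ∈ A, G.Adj x y → y ∈ C := by
  have : Nonempty A := hA.to_subtype
  obtain ⟨a, b, hab⟩ : ∃ a b : A, ¬(G.induce A).Reachable a b := by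
    simpa [connected_iff, Preconnected] using h
  refine ⟨{x | ∃ hx : x ∈ A, (G.induce A).Reachable a ⟨x, hx⟩},
    ⟨fun x hx => hx.1, fun hsub => hab (hsub b.2).2⟩, ⟨a, a.2, .rfl⟩, ?_⟩
  rintro x ⟨hx, hax⟩ y hy hxy
  exact ⟨hy, hax.trans (show (G.induce A).Adj ⟨x, hx⟩ ⟨y, hy⟩ from hxy).reachable⟩

end SimpleGraph

section Chordal

variable {V : Type*} {G : SimpleGraph V}

theorem Chordal.exists_adj_of_isInducedPath (hG : Chordal G) {q : ℕ → V} {m : ℕ}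
    (hq : G.IsInducedPath q m) (hm : 2 ≤ m) {x : V} (hx : x ∉ q '' Set.Iic m)
    (h₀ : G.Adj x (q 0)) (hₘ : G.Adj x (q m)) : ∃ i, 0 < i ∧ i < m ∧ G.Adj x (q i) := by
  by_contra! hinner
  refine (hG (m + 2) (by omega)).false (hq.nonempty_cycleGraph_embedding hx fun i hi => ?_).some
  rw [G.adj_comm]
  refine ⟨fun h => ?_, ?_⟩
  · by_contra
    exact hinner i (by omega) (by omega) h
  · rintro (rfl | rfl)
    exacts [h₀, hₘ]

theorem Chordal.adj_of_isInducedPath (hG : Chordal G) {q : ℕ → V} {m : ℕ}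
    (hq : G.IsInducedPath q m) {x : V} (hx : x ∉ q '' Set.Iic m)
    (h₀ : G.Adj x (q 0)) (hₘ : G.Adj x (q m)) : ∀ i ≤ m, G.Adj x (q i) := by
  induction m generalizing q with
  | zero => exact fun i hi => by rwa [Nat.le_zero.mp hi]
  | succ m ih =>
    have h₁ : G.Adj x (q 1) := by
      classical
      by_contra h₁
      have hex : ∃ l, 1 ≤ l ∧ G.Adj x (q l) := ⟨m + 1, by omega, hₘ⟩
      have hl := Nat.find_spec hex
      have hlm : Nat.find hex ≤ m + 1 := Nat.find_min' hex ⟨by omega, hₘ⟩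
      have hl₂ : 2 ≤ Nat.find hex := by
        by_contra
        exact h₁ (by simpa [show Nat.find hex = 1 by omega] using hl.2)
      obtain ⟨i, hi₀, hil, hi⟩ := hG.exists_adj_of_isInducedPath (hq.mono hlm) hl₂
        (fun hx' => hx (Set.image_mono (Set.Iic_subset_Iic.mpr hlm) hx')) h₀ hl.2
      exact Nat.find_min hex hil ⟨hi₀, hi⟩
    have hx' : x ∉ (fun t => q (t + 1)) '' Set.Iic m := by
      rintro ⟨t, ht, rfl⟩
      exact hx ⟨t + 1, by simpa using ht, rfl⟩
    have htail := ih hq.tail hx' h₁ hₘ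
    rintro (_ | i) hi
    · exact h₀
    · exact htail i (by omega)

theorem Chordal.exists_forall_adj_insert (hG : Chordal G) {C S : Set V} {s v : V}
    (hC : (G.induce C).Connected) (hS : G.IsClique (insert s S)) (hsC : s ∉ C)
    (hSC : Disjoint S C) (hs : ∃ x ∈ C, G.Adj s x) (hv : v ∈ C) (hvS : ∀ t ∈ S, G.Adj v t) :
    ∃ u ∈ C, ∀ t ∈ insert s S, G.Adj u t := by
  by_cases hvs : G.Adj v s
  · exact ⟨v, hv, Set.forall_mem_insert.mpr ⟨hvs, hvS⟩⟩
  obtain ⟨c, hc, hsc⟩ := hs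
  have hA : (G.induce (C ∪ {s})).Connected :=
    connected_induce_union hC.preconnected Preconnected.of_subsingleton hc rfl hsc.symm
  obtain ⟨p, hp⟩ := hA.exists_walk_length_eq_dist ⟨v, .inl hv⟩ ⟨s, .inr rfl⟩
  set m := p.length
  have hq := (p.isInducedPath_getVert_of_length_eq_dist hp).map (Embedding.induce _)
  set q := (Embedding.induce (G := G) (C ∪ {s})) ∘ p.getVert
  have hq₀ : q 0 = v := by simp [q]
  have hqₘ : q m = s := by simp [q, m]
  have hmem : ∀ i, q i ∈ C ∪ {s} := fun i => (p.getVert i).2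
  have hm₀ : m ≠ 0 := fun h => hsC (by rw [← hqₘ, h, hq₀]; exact hv)
  have hm₁ : m ≠ 1 := fun h =>
    hvs (by rw [← hq₀, ← hqₘ]; exact (hq.2 (by omega) le_rfl).mpr (by omega))
  refine ⟨q (m - 1), ?_, ?_⟩
  · refine (hmem (m - 1)).resolve_right fun h => ?_
    have := hq.1 (Set.mem_Iic.mpr (Nat.sub_le m 1)) (Set.mem_Iic.mpr le_rfl) (h.trans hqₘ.symm)
    omega
  · rintro t (rfl | ht)
    · rw [← hqₘ]
      exact (hq.2 (by omega) le_rfl).mpr (by omega)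
    · have hts : t ≠ s := fun h => hvs (h ▸ hvS t ht)
      have hoff : t ∉ q '' Set.Iic m := by
        rintro ⟨i, -, hi⟩
        rcases hmem i with h | h
        · exact hSC.notMem_of_mem_left ht (hi ▸ h)
        · exact hts (hi ▸ h)
      refine (hG.adj_of_isInducedPath hq hoff ?_ ?_ (m - 1) (by omega)).symm
      · rw [hq₀]
        exact (hvS t ht).symm
      · rw [hqₘ]
        exact hS (Set.mem_insert_of_mem s ht) (Set.mem_insert s S) hts

theorem Chordal.exists_forall_adj_of_connected (hG : Chordal G) {C S : Set V} (hSf : S.Finite)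
    (hC : (G.induce C).Connected) (hS : G.IsClique S) (hSC : Disjoint S C)
    (hN : ∀ s ∈ S, ∃ x ∈ C, G.Adj s x) : ∃ v ∈ C, ∀ s ∈ S, G.Adj v s := by
  induction S, hSf using Set.Finite.induction_on with
  | empty =>
    obtain ⟨⟨v, hv⟩⟩ := hC.nonempty
    exact ⟨v, hv, by simp⟩
  | @insert s S hsS hSf ih =>
    obtain ⟨v, hv, hvS⟩ := ih (hS.subset (Set.subset_insert s S))
      (hSC.mono_left (Set.subset_insert s S)) fun t ht => hN t (Set.mem_insert_of_mem s ht)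
    exact hG.exists_forall_adj_insert hC hS (hSC.notMem_of_mem_left (Set.mem_insert s S))
      (hSC.mono_left (Set.subset_insert s S)) (hN s (Set.mem_insert s S)) hv hvS

end Chordal

section Construction

variable {V : Type*} {G : SimpleGraph V}

theorem CNiceTD.introduce_diff {C S T : Set V} {c : ℕ} (hc : CNiceTD G (C ∪ S) S c)
    (hC : C.Nonempty) (hST : S ⊆ T) (hT : G.IsClique T) (hCT : Disjoint C T)
    (hN : ∀ t ∈ T \ S, ∀ x ∈ C, ¬G.Adj t x) (hf : (T \ S).Finite) :
    CNiceTD G (C ∪ T) T (c + (T \ S).ncard) := by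
  suffices CNiceTD G (C ∪ S ∪ (T \ S)) (S ∪ (T \ S)) (c + (T \ S).ncard) by
    rwa [Set.union_assoc, Set.union_sdiff_cancel hST] at this
  refine Set.Finite.induction_on_subset
    (motive := fun D _ => CNiceTD G (C ∪ S ∪ D) (S ∪ D) (c + D.ncard)) (T \ S) hf
    (by simpa using hc) fun {t D} ht hD htD ih => ?_
  have htC : t ∉ C := fun h => hCT.notMem_of_mem_left h ht.1
  rw [Set.ncard_insert_of_notMem htD (hf.subset hD), ← add_assoc]
  refine .introduce _ _ t (by simp) (by grind) ?_ ?_ (hT.subset (by grind)) _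
    (by convert ih using 1 <;> grind)
  · obtain ⟨x, hx⟩ := hC
    refine fun h => hCT.notMem_of_mem_left hx ?_
    have hx' : x ∈ S ∪ insert t D := h ▸ .inl (.inl hx)
    rcases hx' with h | rfl | h
    · exact hST h
    · exact ht.1
    · exact (hD h).1
  · intro u hu hadj
    have : u ∉ C := fun huC => hN t ht u huC hadj
    grind

theorem CNiceTD.join_of_closed {U T C : Set V} {c₁ c₂ : ℕ} (hTU : T ⊆ U) (hCW : C ⊂ U \ T)
    (hC : C.Nonempty) (hclosed : ∀ x ∈ C, ∀ y ∈ U \ T, G.Adj x y → y ∈ C)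
    (hT : G.IsClique T) (h₁ : CNiceTD G (T ∪ C) T c₁) (h₂ : CNiceTD G (U \ C) T c₂) :
    CNiceTD G U T (c₁ + c₂ + 1) := by
  obtain ⟨w, hw, hwC⟩ := Set.exists_of_ssubset hCW
  obtain ⟨x, hx⟩ := hC
  have hCU := hCW.subset
  have hU : T ∪ C ∪ U \ C = U := by grind
  rw [← hU]
  refine .join _ _ _ (by grind) (by grind) (by grind) ?_ hT _ _ h₁ h₂
  intro a b ha hb hab
  have hba := hab.symm
  grind

def HasSmallCNiceTD (G : SimpleGraph V) (k : ℕ) (U T : Set V) : Prop :=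
  ∃ c, CNiceTD G U T c ∧ c < (k + 3) * (U \ T).ncard

variable [Finite V] {k : ℕ} {U T : Set V}

theorem exists_cNiceTD_union_le {W S : Set V} {v : V} (hvW : v ∈ W) (hWS : Disjoint W S)
    (hS : G.IsClique (S ∪ {v}))
    (ih : ∀ U' T' : Set V, (U' \ T').ncard < W.ncard → T' ⊂ U' → G.IsClique T' →
      HasSmallCNiceTD G k U' T') :
    ∃ c, CNiceTD G (W ∪ S) (S ∪ {v}) c ∧ c ≤ (k + 3) * (W.ncard - 1) + 1 := by
  by_cases hWv : W = {v}
  · exact ⟨1, by rw [hWv, Set.union_comm]; exact .leaf _ hS, by omega⟩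
  obtain ⟨w, hwW, hwv⟩ : ∃ w ∈ W, w ≠ v := by
    by_contra! h
    exact hWv (Set.eq_singleton_iff_unique_mem.mpr ⟨hvW, h⟩)
  have hwS : w ∉ S := hWS.notMem_of_mem_left hwW
  have hvS : v ∉ S := hWS.notMem_of_mem_left hvW
  have hdiff : (W ∪ S) \ (S ∪ {v}) = W \ {v} := by grind
  have hW₁ : 1 ≤ W.ncard := (Set.ncard_pos W.toFinite).mpr ⟨v, hvW⟩
  have hsub : S ∪ {v} ⊂ W ∪ S :=
    (Set.ssubset_iff_of_subset (by grind)).mpr ⟨w, .inl hwW, by grind⟩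
  obtain ⟨c, hc, hlt⟩ := ih (W ∪ S) (S ∪ {v})
    (by rw [hdiff, Set.ncard_sdiff_singleton_of_mem hvW]; omega) hsub hS
  rw [hdiff, Set.ncard_sdiff_singleton_of_mem hvW] at hlt
  exact ⟨c, hc, by omega⟩

theorem hasSmallCNiceTD_of_connected (hG : Chordal G) (hk : G.Colorable k) (hTU : T ⊂ U)
    (hT : G.IsClique T) (hW : (G.induce (U \ T)).Connected)
    (ih : ∀ U' T' : Set V, (U' \ T').ncard < (U \ T).ncard → T' ⊂ U' → G.IsClique T' →
      HasSmallCNiceTD G k U' T') :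
    HasSmallCNiceTD G k U T := by
  set W := U \ T
  set S := {t ∈ T | ∃ x ∈ W, G.Adj t x}
  have hST : S ⊆ T := fun t ht => ht.1
  have hWT : Disjoint W T := Set.disjoint_sdiff_left
  obtain ⟨v, hvW, hvS⟩ := hG.exists_forall_adj_of_connected S.toFinite hW (hT.subset hST)
    (hWT.symm.mono_left hST) fun t ht => ht.2
  have hvS' : G.IsClique (S ∪ {v}) := by
    rw [Set.union_singleton]
    exact (hT.subset hST).insert fun t ht _ => hvS t ht
  have hvnS : v ∉ S := fun h => hWT.notMem_of_mem_left hvW (hST h)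
  have hW₁ : 1 ≤ W.ncard := (Set.ncard_pos W.toFinite).mpr ⟨v, hvW⟩
  obtain ⟨c₀, hc₀, hc₀le⟩ := exists_cNiceTD_union_le hvW (hWT.mono_right hST) hvS' ih
  have hU := CNiceTD.introduce_diff (hc₀.forget _ _ v (.inl hvW) hvnS (hT.subset hST) c₀)
    ⟨v, hvW⟩ hST hT hWT (fun t ht x hx hadj => ht.2 ⟨ht.1, x, hx, hadj⟩) (Set.toFinite _)
  rw [Set.sdiff_union_of_subset hTU.subset] at hU
  refine ⟨_, hU, ?_⟩
  have hk' : (T \ S).ncard ≤ k := (hT.subset Set.sdiff_subset).ncard_le_of_colorable hk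
  obtain ⟨n, hn⟩ : ∃ n, W.ncard = n + 1 := ⟨W.ncard - 1, by omega⟩
  rw [hn, Nat.add_sub_cancel] at hc₀le
  rw [hn, Nat.mul_succ]
  omega

theorem hasSmallCNiceTD_of_not_connected (hTU : T ⊂ U) (hT : G.IsClique T)
    (hW : ¬(G.induce (U \ T)).Connected)
    (ih : ∀ U' T' : Set V, (U' \ T').ncard < (U \ T).ncard → T' ⊂ U' → G.IsClique T' →
      HasSmallCNiceTD G k U' T') :
    HasSmallCNiceTD G k U T := by
  obtain ⟨C, hCW, hC, hclosed⟩ :=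
    exists_ssubset_closed_of_not_connected_induce (Set.sdiff_nonempty.mpr hTU.not_subset) hW
  have hCU := hCW.subset
  obtain ⟨w, hwW, hwC⟩ := Set.exists_of_ssubset hCW
  obtain ⟨x, hx⟩ := hC
  have h₁ : (T ∪ C) \ T = C := by grind
  have h₂ : (U \ C) \ T = (U \ T) \ C := by grind
  have hsum : ((U \ T) \ C).ncard + C.ncard = (U \ T).ncard :=
    Set.ncard_sdiff_add_ncard_of_subset hCU
  have hC₁ : 0 < C.ncard := (Set.ncard_pos C.toFinite).mpr ⟨x, hx⟩
  have hC₂ : 0 < ((U \ T) \ C).ncard := (Set.ncard_pos (Set.toFinite _)).mpr ⟨w, hwW, hwC⟩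
  obtain ⟨c₁, hc₁, hlt₁⟩ := ih (T ∪ C) T (by rw [h₁]; omega)
    ((Set.ssubset_iff_of_subset Set.subset_union_left).mpr ⟨x, .inr hx, (hCU hx).2⟩) hT
  obtain ⟨c₂, hc₂, hlt₂⟩ := ih (U \ C) T (by rw [h₂]; omega)
    ((Set.ssubset_iff_of_subset (by grind)).mpr ⟨w, by grind, hwW.2⟩) hT
  refine ⟨_, hc₁.join_of_closed hTU.subset hCW ⟨x, hx⟩ hclosed hT hc₂, ?_⟩
  rw [h₁] at hlt₁
  rw [h₂] at hlt₂
  rw [← hsum, Nat.mul_add]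
  omega

theorem hasSmallCNiceTD (hG : Chordal G) (hk : G.Colorable k) (hTU : T ⊂ U)
    (hT : G.IsClique T) : HasSmallCNiceTD G k U T := by
  induction hn : (U \ T).ncard using Nat.strong_induction_on generalizing U T with
  | _ n ih =>
    have ih' : ∀ U' T' : Set V, (U' \ T').ncard < (U \ T).ncard → T' ⊂ U' → G.IsClique T' →
        HasSmallCNiceTD G k U' T' := fun U' T' h hTU' hT' => ih _ (hn ▸ h) hTU' hT' rfl
    by_cases hW : (G.induce (U \ T)).Connected
    · exact hasSmallCNiceTD_of_connected hG hk hTU hT hW ih'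
    · exact hasSmallCNiceTD_of_not_connected hTU hT hW ih'

end Construction

theorem statement_9_general {V : Type} [Fintype V] (G : SimpleGraph V)
    (k : ℕ) (hchord : Chordal G)
    (hcol : ∃ α : V → Fin k, IsColoring G k α)
    (T : Set V) (hT : G.IsClique T) (hn : 1 ≤ Fintype.card V) :
    ∃ nt : ℕ, CNiceTD G Set.univ T nt ∧ nt ≤ (k + 3) * Fintype.card V := by
  obtain ⟨α, hα⟩ := hcol
  have hk : G.Colorable k := ⟨Coloring.mk α fun h => hα _ _ h⟩
  rcases (Set.subset_univ T).eq_or_ssubset with rfl | hTU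
  · exact ⟨1, .leaf _ hT, Nat.mul_pos (by omega) hn⟩
  obtain ⟨c, hc, hlt⟩ := hasSmallCNiceTD hchord hk hTU hT
  refine ⟨c, hc, hlt.le.trans (Nat.mul_le_mul_left _ ?_)⟩
  calc (Set.univ \ T).ncard ≤ (Set.univ : Set V).ncard := Set.ncard_le_ncard Set.sdiff_subset
    _ = Fintype.card V := by rw [Set.ncard_univ, Nat.card_eq_fintype_card]

/-- every chordal `k`-colorable graph `G` on `n ≥ 1` vertices with a
clique `T` admits a chordal nice tree decomposition of `(G,T)` with at most
`(k+3)·n` nodes. -/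
theorem statement_9 {V : Type} [Fintype V] [DecidableEq V] (G : SimpleGraph V)
    (k : ℕ) (hk : 1 ≤ k) (hchord : Chordal G)
    (hcol : ∃ α : V → Fin k, IsColoring G k α)
    (T : Set V) (hT : G.IsClique T) (hn : 1 ≤ Fintype.card V) :
    ∃ nt : ℕ, CNiceTD G Set.univ T nt ∧ nt ≤ (k + 3) * Fintype.card V :=
  statement_9_general G k hchord hcol T hT hn
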